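/- arXiv:1705.07010 — 2 statements merged into one kernel-verified Lean document; each statement's English description precedes it below -/
import Mathlib

section
/- Let A be self-adjoint on a finite-dimensional real inner product space with smallest eigenvalue λ₁, let à = A - λ₁ I (so à ≥ 0), σ ≥ 1/2, τ > 0. If y^n satisfies the nonstandard scheme (exp(λ₁τ) y^{n+1} - y^n)/τ + Ã(σ exp(λ₁τ) y^{n+1} + (1-σ) y^n) = 0 with y⁰ = w⁰, then ‖y^n‖ ≤ exp(-λ₁ n τ) ‖w⁰‖ for all n ≥ 0. -/
open scoped RealInnerProductSpace

/-- The nonstandard scheme with Ã = A - λ₁I, λ₁ the smallest eigenvalue of A = A*,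
is unconditionally stable for σ ≥ 1/2: ‖yⁿ‖ ≤ exp(-λ₁ n τ) ‖w⁰‖. -/
theorem stmt_4 {H : Type*} [NormedAddCommGroup H] [InnerProductSpace ℝ H]
    [FiniteDimensional ℝ H] (A : H →ₗ[ℝ] H)
    (hsa : ∀ x y : H, ⟪A x, y⟫ = ⟪x, A y⟫)
    (lam1 : ℝ) (heig : Module.End.HasEigenvalue A lam1)
    (hmin : ∀ x : H, lam1 * ‖x‖ ^ 2 ≤ ⟪A x, x⟫)
    (σ τ : ℝ) (hσ : 1 / 2 ≤ σ) (hτ : 0 < τ)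
    (w0 : H) (y : ℕ → H) (hy0 : y 0 = w0)
    (hscheme : ∀ n : ℕ,
      (1 / τ) • (Real.exp (lam1 * τ) • y (n + 1) - y n) +
        ((A - lam1 • (LinearMap.id : H →ₗ[ℝ] H))) ((σ * Real.exp (lam1 * τ)) • y (n + 1) + (1 - σ) • y n) = 0) :
    ∀ n : ℕ, ‖y n‖ ≤ Real.exp (-(lam1 * n * τ)) * ‖w0‖ := by
  set T : H →ₗ[ℝ] H := A - lam1 • (LinearMap.id : H →ₗ[ℝ] H) with hT
  have hpsd : ∀ x : H, 0 ≤ ⟪T x, x⟫ := by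
    intro x
    have h1 := hmin x
    have h2 : ⟪T x, x⟫ = ⟪A x, x⟫ - lam1 * ‖x‖ ^ 2 := by
      simp [hT, LinearMap.sub_apply, inner_sub_left, real_inner_smul_left,
        real_inner_self_eq_norm_sq]
    linarith
  set g : ℕ → H := fun n => Real.exp (lam1 * n * τ) • y n with hg
  have hstep : ∀ n : ℕ, ‖g (n + 1)‖ ≤ ‖g n‖ := by
    intro n
    set a : H := g (n + 1) with ha
    set b : H := g n with hb
    set c : ℝ := Real.exp (lam1 * n * τ) with hc
    set e : ℝ := Real.exp (lam1 * τ) with he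
    have hce : c * e = Real.exp (lam1 * (n + 1 : ℕ) * τ) := by
      rw [hc, he, ← Real.exp_add]
      congr 1
      push_cast
      ring
    have hain : a = (c * e) • y (n + 1) := by rw [ha, hg]; simp [hce]
    have hbin : b = c • y n := by rw [hb, hg, hc]
    have heq : (1 / τ) • (a - b) + T (σ • a + (1 - σ) • b) = 0 := by
      have h := hscheme n
      have h2 : c • ((1 / τ) • (e • y (n + 1) - y n) +
          T ((σ * e) • y (n + 1) + (1 - σ) • y n)) = 0 := by
        rw [h, smul_zero]
      rw [hain, hbin, ← h2]
      simp only [map_add, map_smul, smul_add, smul_sub, smul_smul]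
      module
    set v : H := σ • a + (1 - σ) • b with hv
    have hAv : T v = -((1 / τ) • (a - b)) := by
      exact eq_neg_of_add_eq_zero_right heq
    have hdv : ⟪a - b, v⟫ ≤ 0 := by
      have h0 := hpsd v
      rw [hAv] at h0
      rw [inner_neg_left, real_inner_smul_left] at h0
      have hτi : 0 < 1 / τ := by positivity
      nlinarith
    have hid : ‖a‖ ^ 2 - ‖b‖ ^ 2 = 2 * ⟪a - b, v⟫ - (2 * σ - 1) * ‖a - b‖ ^ 2 := by
      rw [← real_inner_self_eq_norm_sq, ← real_inner_self_eq_norm_sq,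
        ← real_inner_self_eq_norm_sq, hv]
      simp only [inner_sub_left, inner_sub_right, inner_add_right, inner_add_left,
        real_inner_smul_left, real_inner_smul_right, real_inner_comm b a]
      ring
    have hsq : ‖a‖ ^ 2 ≤ ‖b‖ ^ 2 := by
      nlinarith [sq_nonneg ‖a - b‖]
    have := Real.sqrt_le_sqrt hsq
    rwa [Real.sqrt_sq (norm_nonneg _), Real.sqrt_sq (norm_nonneg _)] at this
  have hmono : ∀ n : ℕ, ‖g n‖ ≤ ‖w0‖ := by
    intro n
    induction n with
    | zero => simp [hg, hy0]
    | succ k ih => exact le_trans (hstep k) ih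
  intro n
  have hgn : ‖g n‖ = Real.exp (lam1 * n * τ) * ‖y n‖ := by
    rw [hg]
    simp [norm_smul, abs_of_pos (Real.exp_pos _)]
  have hE : 0 < Real.exp (lam1 * n * τ) := Real.exp_pos _
  have h := hmono n
  rw [hgn] at h
  rw [Real.exp_neg]
  calc ‖y n‖ = (Real.exp (lam1 * n * τ))⁻¹ * (Real.exp (lam1 * n * τ) * ‖y n‖) := by
        field_simp
    _ ≤ (Real.exp (lam1 * n * τ))⁻¹ * ‖w0‖ := by
        apply mul_le_mul_of_nonneg_left h (by positivity)
end

section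
/- Let A be self-adjoint on a finite-dimensional real inner product space, φ₁ a unit eigenvector of A with eigenvalue λ₁, and à = A - λ₁I. If y^n satisfies the nonstandard scheme (exp(λ₁τ) y^{n+1} - y^n)/τ + Ã(σ exp(λ₁τ) y^{n+1} + (1-σ) y^n) = 0, then the fundamental mode is computed exactly: ⟨y^{n+1}, φ₁⟩ = exp(-λ₁τ) ⟨y^n, φ₁⟩. -/
open scoped RealInnerProductSpace

theorem LinearMap.IsSymmetric.inner_sub_smul_id_apply_eigenvector_eq_zero
    {E : Type*} [NormedAddCommGroup E] [InnerProductSpace ℝ E] {A : E →ₗ[ℝ] E}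
    (hA : A.IsSymmetric) {μ : ℝ} {φ : E} (hφ : A φ = μ • φ) (z : E) :
    ⟪(A - μ • (LinearMap.id : E →ₗ[ℝ] E)) z, φ⟫ = 0 := by
  rw [LinearMap.sub_apply, LinearMap.smul_apply, LinearMap.id_apply, inner_sub_left, hA, hφ,
    real_inner_smul_right, real_inner_smul_left, sub_self]

theorem stmt_5_general {H : Type*} [NormedAddCommGroup H] [InnerProductSpace ℝ H]
    (A : H →ₗ[ℝ] H)
    (hsa : ∀ x y : H, ⟪A x, y⟫ = ⟪x, A y⟫)
    (lam1 : ℝ) (φ1 : H) (hφeig : A φ1 = lam1 • φ1)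
    (σ τ : ℝ) (hτ : 0 < τ) (y : ℕ → H)
    (hscheme : ∀ n : ℕ,
      (1 / τ) • (Real.exp (lam1 * τ) • y (n + 1) - y n) +
        ((A - lam1 • (LinearMap.id : H →ₗ[ℝ] H))) ((σ * Real.exp (lam1 * τ)) • y (n + 1) + (1 - σ) • y n) = 0) :
    ∀ n : ℕ, ⟪y (n + 1), φ1⟫ = Real.exp (-(lam1 * τ)) * ⟪y n, φ1⟫ := by
  intro n
  have hproj := congrArg (⟪·, φ1⟫) (hscheme n)
  rw [inner_add_left,
    LinearMap.IsSymmetric.inner_sub_smul_id_apply_eigenvector_eq_zero hsa hφeig, add_zero,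
    real_inner_smul_left, inner_sub_left, real_inner_smul_left, inner_zero_left] at hproj
  have hstep : Real.exp (lam1 * τ) * ⟪y (n + 1), φ1⟫ = ⟪y n, φ1⟫ :=
    sub_eq_zero.mp ((mul_eq_zero.mp hproj).resolve_left (one_div_ne_zero hτ.ne'))
  rw [← hstep, ← mul_assoc, ← Real.exp_add, neg_add_cancel, Real.exp_zero, one_mul]

/-- The nonstandard scheme computes the fundamental mode exactly:
⟨y^{n+1}, φ₁⟩ = exp(-λ₁τ) ⟨yⁿ, φ₁⟩. -/
theorem stmt_5 {H : Type*} [NormedAddCommGroup H] [InnerProductSpace ℝ H]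
    [FiniteDimensional ℝ H] (A : H →ₗ[ℝ] H)
    (hsa : ∀ x y : H, ⟪A x, y⟫ = ⟪x, A y⟫)
    (lam1 : ℝ) (φ1 : H) (hφnorm : ‖φ1‖ = 1) (hφeig : A φ1 = lam1 • φ1)
    (σ τ : ℝ) (hτ : 0 < τ) (y : ℕ → H)
    (hscheme : ∀ n : ℕ,
      (1 / τ) • (Real.exp (lam1 * τ) • y (n + 1) - y n) +
        ((A - lam1 • (LinearMap.id : H →ₗ[ℝ] H))) ((σ * Real.exp (lam1 * τ)) • y (n + 1) + (1 - σ) • y n) = 0) :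
    ∀ n : ℕ, ⟪y (n + 1), φ1⟫ = Real.exp (-(lam1 * τ)) * ⟪y n, φ1⟫ :=
  stmt_5_general A hsa lam1 φ1 hφeig σ τ hτ y hscheme
end
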